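/- The generating function B(x,y) = Σ_G x^{#H(G)} y^{#U(G)}, summed over all bargraphs G, where #H(G) and #U(G) denote the numbers of H and U steps of G, is a formal power series satisfying x·B² − (1 − x − y − xy)·B + xy = 0. -/

import Mathlib

/-- Steps of bargraphs / Motzkin paths. -/
inductive Step where
  | U : Step
  | H : Step
  | D : Step
deriving DecidableEq

/-- Vertical displacement of a step. -/
def Step.val : Step → ℤ
  | .U => 1
  | .H => 0
  | .D => -1

/-- Mirror of a step (swap U and D). -/
def Step.mirror : Step → Step
  | .U => .D
  | .H => .H
  | .D => .U

/-- Final height of a word. -/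
def hgt (w : List Step) : ℤ := (w.map Step.val).sum

/-- A Motzkin path prefix: never goes below the x-axis. -/
def IsMotzkinPrefix (w : List Step) : Prop := ∀ p : List Step, p <+: w → 0 ≤ hgt p

/-- A Motzkin path: never below the x-axis, ends at height 0. -/
def IsMotzkin (w : List Step) : Prop := IsMotzkinPrefix w ∧ hgt w = 0

/-- No peak `UD` and no valley `DU`. -/
def Cornerless (w : List Step) : Prop :=
  ¬ [Step.U, Step.D] <:+: w ∧ ¬ [Step.D, Step.U] <:+: w

/-- A bargraph: starts at the origin, ends on the x-axis, stays strictly above the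
x-axis except at the endpoints, and has no factor `UD` or `DU`. -/
def IsBargraph (w : List Step) : Prop :=
  2 ≤ w.length ∧ hgt w = 0 ∧
    (∀ p : List Step, p <+: w → p ≠ [] → p ≠ w → 0 < hgt p) ∧ Cornerless w

/-- Semiperimeter: number of `U` steps plus number of `H` steps. -/
def semi (w : List Step) : ℕ := w.count Step.U + w.count Step.H

/-- Length of the initial run of `U` steps. -/
def leadU : List Step → ℕ
  | Step.U :: rest => leadU rest + 1
  | _ => 0

/-- Length of the initial run of `H` steps. -/
def leadH : List Step → ℕ
  | Step.H :: rest => leadH rest + 1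
  | _ => 0

/-- Length of the initial run of `D` steps. -/
def leadD : List Step → ℕ
  | Step.D :: rest => leadD rest + 1
  | _ => 0

/-- Length of the first maximal run of `D` steps (0 if none). -/
def firstDescLen : List Step → ℕ
  | [] => 0
  | Step.D :: rest => leadD rest + 1
  | _ :: rest => firstDescLen rest

/-- Number of occurrences of the two-letter factor `a b`. -/
def cnt2 (a b : Step) : List Step → ℕ
  | x :: y :: rest => (if x = a ∧ y = b then 1 else 0) + cnt2 a b (y :: rest)
  | _ => 0

/-- Heights of the columns (`H` steps), starting from a given height. -/
def colHeights : ℤ → List Step → List ℤ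
  | _, [] => []
  | h, Step.U :: rest => colHeights (h + 1) rest
  | h, Step.H :: rest => h :: colHeights h rest
  | h, Step.D :: rest => colHeights (h - 1) rest

/-- Width of the leftmost maximal horizontal segment (0 if none). -/
def lhsW : List Step → ℕ
  | [] => 0
  | Step.H :: rest => leadH rest + 1
  | _ :: rest => lhsW rest

/-- Delete `h` steps at the start of the leftmost horizontal segment. -/
def stripLeadH (h : ℕ) : List Step → List Step
  | [] => []
  | Step.H :: rest => List.drop h (Step.H :: rest)
  | s :: rest => s :: stripLeadH h rest

/-- Number of initial columns of height 1: largest `j` such that the word begins `U H^j`. -/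
def iuc : List Step → ℕ
  | Step.U :: rest => leadH rest
  | _ => 0

/-- Number of maximal horizontal segments. -/
def hsCount : List Step → ℕ
  | [] => 0
  | [Step.H] => 1
  | [_] => 0
  | a :: b :: rest => (if a = Step.H ∧ b ≠ Step.H then 1 else 0) + hsCount (b :: rest)

/-- Mirror image: reverse the word and swap `U` with `D`. -/
def mir (w : List Step) : List Step := (w.reverse).map Step.mirror

/-- Shape of strictly alternating bargraphs:
`U^{i₁} H D^{k₁} H U^{i₂} H D^{k₂} H ⋯ U^{iₘ} H D^{kₘ}` with all `iᵣ, kᵣ ≥ 1`. -/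
inductive SAShape : List Step → Prop where
  | base (i k : ℕ) : 1 ≤ i → 1 ≤ k →
      SAShape (List.replicate i Step.U ++ [Step.H] ++ List.replicate k Step.D)
  | cons (i k : ℕ) (w : List Step) : 1 ≤ i → 1 ≤ k → SAShape w →
      SAShape (List.replicate i Step.U ++ [Step.H] ++ List.replicate k Step.D ++ [Step.H] ++ w)

/-- A strictly alternating bargraph. -/
def IsStrictAlt (w : List Step) : Prop := IsBargraph w ∧ SAShape w

/-- A secondary structure on `{0, …, m-1}`: all consecutive edges are present, every
vertex has at most one non-consecutive neighbour, and there are no crossing edges. -/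
def IsSecondaryStructure {m : ℕ} (G : SimpleGraph (Fin m)) : Prop :=
  (∀ i j : Fin m, (i : ℕ) + 1 = (j : ℕ) → G.Adj i j) ∧
  (∀ i j k : Fin m, G.Adj i j → G.Adj i k →
      (i : ℕ) + 1 ≠ (j : ℕ) → (j : ℕ) + 1 ≠ (i : ℕ) →
      (i : ℕ) + 1 ≠ (k : ℕ) → (k : ℕ) + 1 ≠ (i : ℕ) → j = k) ∧
  ¬ ∃ i j k l : Fin m, (i : ℕ) < (j : ℕ) ∧ (j : ℕ) < (k : ℕ) ∧ (k : ℕ) < (l : ℕ) ∧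
      G.Adj i k ∧ G.Adj j l

/-- Generating function of bargraphs: `x` (variable 0) marks `H` steps,
`y` (variable 1) marks `U` steps. -/
noncomputable def BG : MvPowerSeries (Fin 2) ℚ :=
  fun d => (Nat.card {w : List Step //
    IsBargraph w ∧ w.count Step.H = d 0 ∧ w.count Step.U = d 1} : ℚ)

/-- Generating function of cornerless Motzkin paths. -/
noncomputable def MG : MvPowerSeries (Fin 2) ℚ :=
  fun d => (Nat.card {w : List Step //
    IsMotzkin w ∧ Cornerless w ∧ w.count Step.H = d 0 ∧ w.count Step.U = d 1} : ℚ)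

/-- Generating function of bargraphs avoiding the factor `DH`. -/
noncomputable def BDH : MvPowerSeries (Fin 2) ℚ :=
  fun d => (Nat.card {w : List Step //
    IsBargraph w ∧ ¬ [Step.D, Step.H] <:+: w ∧
      w.count Step.H = d 0 ∧ w.count Step.U = d 1} : ℚ)

/-- Generating function of bargraphs avoiding the factors `DH` and `HH`. -/
noncomputable def BDHHH : MvPowerSeries (Fin 2) ℚ :=
  fun d => (Nat.card {w : List Step //
    IsBargraph w ∧ ¬ [Step.D, Step.H] <:+: w ∧ ¬ [Step.H, Step.H] <:+: w ∧
      w.count Step.H = d 0 ∧ w.count Step.U = d 1} : ℚ)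

/-- Generating function of cornerless Motzkin path prefixes ending at height `h`. -/
noncomputable def Pgf (h : ℕ) : MvPowerSeries (Fin 2) ℚ :=
  fun d => (Nat.card {w : List Step //
    IsMotzkinPrefix w ∧ Cornerless w ∧ hgt w = (h : ℤ) ∧
      w.count Step.H = d 0 ∧ w.count Step.U = d 1} : ℚ)

/-- Decomposition `G = U^a G₁ H G₂ D^a` of a strictly alternating bargraph. -/
def SADecomp (t : ℕ × List Step × List Step) (G : List Step) : Prop :=
  1 ≤ t.1 ∧ IsStrictAlt t.2.1 ∧ IsStrictAlt (Step.U :: (t.2.2 ++ [Step.D])) ∧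
    G = List.replicate t.1 Step.U ++ t.2.1 ++ [Step.H] ++ t.2.2 ++
      List.replicate t.1 Step.D

/-!
Let `M` be the language of cornerless Motzkin paths and `S ⊆ M` the paths that are empty or start
with `H`, so `S = 1 + H·M`. A path of `M` starting with `U` is cut uniquely at its first return to
the axis into a bargraph followed by a path of `S` (the bargraph ends with `D`, so the rest cannot
start with `U`); hence `M = S + B·S`. A bargraph is exactly `U v D` with `v ∈ M` nonempty, so
`B = U·(M - 1)·D`. On generating functions, with `x` counting `H` and `y` counting `U`, this gives
`M = (1 + B)(1 + x M)` and `y M = y + B`, and eliminating `M` yields the quadratic for `B`.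
-/

open List

@[simp] lemma Language.mem_singleton {α : Type*} {x y : List α} :
    x ∈ ({y} : Language α) ↔ x = y :=
  Iff.rfl

namespace Bargraph

variable {a : Step} {u v w : List Step}

@[simp] lemma hgt_nil : hgt [] = 0 := rfl

@[simp] lemma hgt_cons : hgt (a :: w) = a.val + hgt w := by simp [hgt]

@[simp] lemma hgt_append : hgt (u ++ v) = hgt u + hgt v := by simp [hgt]

lemma hgt_eq_count_sub_count : hgt w = w.count .U - w.count .D := by
  induction w with
  | nil => simp
  | cons a w ih => cases a <;> simp [ih, Step.val] <;> ring

lemma length_eq_count_add_count_add_count :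
    w.length = w.count .U + w.count .H + w.count .D := by
  induction w with
  | nil => rfl
  | cons a w ih => cases a <;> simp [ih] <;> omega

def NoCorner (a b : Step) : Prop := ¬(a = .U ∧ b = .D) ∧ ¬(a = .D ∧ b = .U)

lemma cornerless_iff_isChain : Cornerless w ↔ IsChain NoCorner w := by
  rw [isChain_iff_forall_rel_of_append_cons_cons]
  constructor
  · rintro ⟨hUD, hDU⟩ a b l₁ l₂ rfl
    constructor <;> rintro ⟨rfl, rfl⟩
    exacts [hUD ⟨l₁, l₂, by simp⟩, hDU ⟨l₁, l₂, by simp⟩]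
  · intro h
    constructor <;> rintro ⟨l₁, l₂, rfl⟩
    exacts [(h (l₁ := l₁) (l₂ := l₂) (by simp)).1 ⟨rfl, rfl⟩,
      (h (l₁ := l₁) (l₂ := l₂) (by simp)).2 ⟨rfl, rfl⟩]

lemma IsMotzkinPrefix.val_nonneg_of_head (h : IsMotzkinPrefix w) (ha : a ∈ w.head?) :
    0 ≤ a.val := by
  obtain ⟨t, rfl⟩ : ∃ t, w = a :: t := by
    cases w with
    | nil => simp at ha
    | cons b t =>
      obtain rfl := Option.some_injective _ ha
      exact ⟨t, rfl⟩
  simpa using h [a] (by simp)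

lemma IsMotzkin.val_nonpos_of_getLast (h : IsMotzkin w) (ha : a ∈ w.getLast?) :
    a.val ≤ 0 := by
  obtain ⟨t, rfl⟩ := getLast?_eq_some_iff.mp (Option.mem_def.mp ha)
  have ht := h.1 t (prefix_append t [a])
  have h0 := h.2
  simp only [hgt_append, hgt_cons, hgt_nil] at h0
  omega

lemma IsMotzkin.noCorner_U_head (h : IsMotzkin w) : ∀ b ∈ w.head?, NoCorner .U b := by
  intro b hb
  have := IsMotzkinPrefix.val_nonneg_of_head h.1 hb
  cases b <;> simp_all [NoCorner, Step.val]

lemma IsMotzkin.noCorner_getLast_D (h : IsMotzkin w) : ∀ b ∈ w.getLast?, NoCorner b .D := by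
  intro b hb
  have := IsMotzkin.val_nonpos_of_getLast h hb
  cases b <;> simp_all [NoCorner, Step.val]

lemma isMotzkinPrefix_cons_H : IsMotzkinPrefix (.H :: w) ↔ IsMotzkinPrefix w := by
  simp only [IsMotzkinPrefix, prefix_cons_iff]
  constructor
  · intro h p hp
    simpa [Step.val] using h (.H :: p) (.inr ⟨p, rfl, hp⟩)
  · rintro h p (rfl | ⟨q, rfl, hq⟩)
    · simp
    · simpa [Step.val] using h q hq

def cornerlessMotzkin : Language Step := {w | IsMotzkin w ∧ Cornerless w}

def bargraphs : Language Step := {w | IsBargraph w}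

lemma mem_cornerlessMotzkin : w ∈ cornerlessMotzkin ↔ IsMotzkin w ∧ Cornerless w := Iff.rfl

lemma mem_bargraphs : w ∈ bargraphs ↔ IsBargraph w := Iff.rfl

/-- The cornerless Motzkin paths that do not start with `U`. -/
def flatStart : Language Step := 1 + {[.H]} * cornerlessMotzkin

lemma cons_H_mem_cornerlessMotzkin :
    .H :: u ∈ cornerlessMotzkin ↔ u ∈ cornerlessMotzkin := by
  simp [mem_cornerlessMotzkin, IsMotzkin, isMotzkinPrefix_cons_H, Step.val,
    cornerless_iff_isChain, isChain_cons, NoCorner]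

lemma mem_flatStart : w ∈ flatStart ↔ w = [] ∨ ∃ u ∈ cornerlessMotzkin, .H :: u = w := by
  simp [flatStart, Language.mem_add, Language.mem_mul]

lemma IsBargraph.exists_eq_cons_append (hw : IsBargraph w) :
    ∃ v ∈ cornerlessMotzkin, v ≠ [] ∧ .U :: (v ++ [.D]) = w := by
  obtain ⟨hlen, hh, hpos, hc⟩ := hw
  obtain ⟨a, v, c, rfl⟩ : ∃ a v c, w = a :: (v ++ [c]) := by
    rcases w with _ | ⟨a, t⟩
    · simp at hlen
    rcases eq_nil_or_concat t with rfl | ⟨v, c, rfl⟩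
    · simp at hlen
    exact ⟨a, v, c, by simp⟩
  have ha := hpos [a] (by simp) (by simp) (by simp)
  have hav := hpos (a :: v) (by simp) (by simp) (by simp)
  obtain rfl : a = .U := by cases a <;> simp_all [Step.val]
  have hcneg : c.val < 0 := by
    simp only [hgt_cons, hgt_append, hgt_nil] at hh hav
    omega
  obtain rfl : c = .D := by cases c <;> simp [Step.val] at hcneg ⊢
  simp only [hgt_cons, hgt_append, hgt_nil, Step.val] at hh
  refine ⟨v, ⟨⟨fun p hp => ?_, by simp at hh; omega⟩, ?_⟩, ?_, rfl⟩
  · have hp' := hpos (.U :: p) (by simpa using hp.trans (prefix_append v [.D])) (by simp)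
      (ne_of_apply_ne length (by simp; have := hp.length_le; omega))
    simp only [hgt_cons, Step.val] at hp'
    omega
  · rw [cornerless_iff_isChain] at hc ⊢
    exact (isChain_cons.mp hc).2.left_of_append
  · rintro rfl
    exact hc.1 ⟨[], [], rfl⟩

lemma isBargraph_cons_append (hv : v ∈ cornerlessMotzkin) (hne : v ≠ []) :
    IsBargraph (.U :: (v ++ [.D])) := by
  obtain ⟨hv, hc⟩ := hv
  refine ⟨by simp, by simp [Step.val, hv.2], fun p hp hp0 hpw => ?_, ?_⟩
  · rcases prefix_cons_iff.mp hp with rfl | ⟨q, rfl, hq⟩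
    · exact absurd rfl hp0
    rcases prefix_concat_iff.mp hq with rfl | hq
    · exact absurd rfl hpw
    have := hv.1 q hq
    simp only [hgt_cons, Step.val]
    omega
  · rw [cornerless_iff_isChain] at hc ⊢
    refine isChain_cons.mpr ⟨?_, isChain_append.mpr ⟨hc, isChain_singleton _, ?_⟩⟩
    · rw [head?_append_of_ne_nil _ hne]
      exact IsMotzkin.noCorner_U_head hv
    · simpa using IsMotzkin.noCorner_getLast_D hv

lemma isBargraph_iff_exists :
    IsBargraph w ↔ ∃ v ∈ cornerlessMotzkin, v ≠ [] ∧ .U :: (v ++ [.D]) = w :=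
  ⟨IsBargraph.exists_eq_cons_append,
    fun ⟨_, hv, hne, hw⟩ => hw ▸ isBargraph_cons_append hv hne⟩

lemma IsBargraph.eq_of_prefix {b b' : List Step} (hb : IsBargraph b) (hb' : IsBargraph b')
    (h : b <+: b') : b = b' := by
  by_contra hne
  have := hb'.2.2.1 b h (by rintro rfl; exact absurd hb.1 (by simp)) hne
  rw [hb.2.1] at this
  exact this.false

lemma IsBargraph.getLast?_eq {b : List Step} (hb : IsBargraph b) : b.getLast? = some .D := by
  obtain ⟨v, -, -, rfl⟩ := IsBargraph.exists_eq_cons_append hb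
  exact getLast?_concat (l := .U :: v)

lemma isBargraph_take {n : ℕ} (hw : IsMotzkinPrefix w) (hc : Cornerless w) (hn : 1 < n)
    (hnw : n ≤ w.length) (h0 : hgt (w.take n) = 0)
    (hmin : ∀ k, 0 < k → k < n → hgt (w.take k) ≠ 0) : IsBargraph (w.take n) := by
  refine ⟨by simp; omega, h0, fun p hp hp0 hpn => ?_,
    cornerless_iff_isChain.mpr ((cornerless_iff_isChain.mp hc).take n)⟩
  have hpw : p <+: w := hp.trans (take_prefix n w)
  have hlt : p.length < n := by
    refine lt_of_le_of_ne (hp.length_le.trans (length_take_le _ _)) fun h => hpn ?_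
    exact hp.eq_of_length (by simp [h]; omega)
  have hne := hmin p.length (length_pos_iff.mpr hp0) hlt
  rw [← prefix_iff_eq_take.mp hpw] at hne
  exact lt_of_le_of_ne (hw p hpw) hne.symm

lemma mem_flatStart_of_append {b s : List Step} (h : b ++ s ∈ cornerlessMotzkin)
    (hb : IsBargraph b) : s ∈ flatStart := by
  have hchain := cornerless_iff_isChain.mp h.2
  rw [isChain_append] at hchain
  have hs : s ∈ cornerlessMotzkin := by
    refine ⟨⟨fun q hq => ?_, ?_⟩, cornerless_iff_isChain.mpr hchain.2.1⟩
    · simpa [hb.2.1] using h.1.1 (b ++ q) ((prefix_append_right_inj b).mpr hq)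
    · simpa [hb.2.1] using h.1.2
  rcases s with _ | ⟨c, s⟩
  · exact mem_flatStart.mpr (.inl rfl)
  have hcD := IsMotzkinPrefix.val_nonneg_of_head hs.1.1 (a := c) rfl
  have hcU := hchain.2.2 .D (IsBargraph.getLast?_eq hb) c rfl
  obtain rfl : c = .H := by cases c <;> simp_all [NoCorner, Step.val]
  exact mem_flatStart.mpr (.inr ⟨s, cons_H_mem_cornerlessMotzkin.mp hs, rfl⟩)

lemma exists_bargraph_append_flatStart (hw : w ∈ cornerlessMotzkin) (hU : w.head? = some .U) :
    ∃ b ∈ bargraphs, ∃ s ∈ flatStart, b ++ s = w := by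
  obtain ⟨t, rfl⟩ : ∃ t, w = .U :: t := by cases w <;> simp_all
  have hfull : 0 < t.length + 1 ∧ hgt ((.U :: t).take (t.length + 1)) = 0 := by
    simpa using hw.1.2
  have hex : ∃ k, 0 < k ∧ hgt ((.U :: t).take k) = 0 := ⟨_, hfull⟩
  -- `Nat.find hex` is the length of the path up to its first return to the axis
  obtain ⟨hn0, hnh⟩ := Nat.find_spec hex
  have hn1 : Nat.find hex ≠ 1 := fun h => by simp [h, Step.val] at hnh
  have hb := isBargraph_take hw.1.1 hw.2 (by omega) (Nat.find_min' hex hfull) hnh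
    fun k hk hkn => not_and.mp (Nat.find_min hex hkn) hk
  have hsplit := take_append_drop (Nat.find hex) (.U :: t)
  exact ⟨_, hb, _, mem_flatStart_of_append (hsplit.symm ▸ hw) hb, hsplit⟩

lemma nil_mem_cornerlessMotzkin : [] ∈ cornerlessMotzkin :=
  ⟨⟨fun p hp => by simp [prefix_nil.mp hp], rfl⟩, cornerless_iff_isChain.mpr isChain_nil⟩

lemma mem_cornerlessMotzkin_of_mem_flatStart (hw : w ∈ flatStart) : w ∈ cornerlessMotzkin := by
  rcases mem_flatStart.mp hw with rfl | ⟨u, hu, rfl⟩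
  exacts [nil_mem_cornerlessMotzkin, cons_H_mem_cornerlessMotzkin.mpr hu]

lemma IsBargraph.isMotzkinPrefix (hw : IsBargraph w) : IsMotzkinPrefix w := by
  intro p hp
  by_cases hp0 : p = []
  · simp [hp0]
  by_cases hpw : p = w
  · rw [hpw, hw.2.1]
  · exact (hw.2.2.1 p hp hp0 hpw).le

lemma append_mem_cornerlessMotzkin {b s : List Step} (hb : IsBargraph b) (hs : s ∈ flatStart) :
    b ++ s ∈ cornerlessMotzkin := by
  have hsM := mem_cornerlessMotzkin_of_mem_flatStart hs
  refine ⟨⟨fun p hp => ?_, by simp [hb.2.1, hsM.1.2]⟩, ?_⟩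
  · rcases prefix_or_prefix_of_prefix hp (prefix_append b s) with h | ⟨q, rfl⟩
    · exact IsBargraph.isMotzkinPrefix hb p h
    · have := hsM.1.1 q ((prefix_append_right_inj b).mp hp)
      simpa [hb.2.1] using this
  · rw [cornerless_iff_isChain, isChain_append]
    refine ⟨cornerless_iff_isChain.mp hb.2.2.2, cornerless_iff_isChain.mp hsM.2, ?_⟩
    rw [IsBargraph.getLast?_eq hb]
    rcases mem_flatStart.mp hs with rfl | ⟨u, -, rfl⟩ <;> simp [NoCorner]

lemma cornerlessMotzkin_eq : cornerlessMotzkin = flatStart + bargraphs * flatStart := by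
  ext w
  rw [Language.mem_add, Language.mem_mul]
  constructor
  · intro hw
    rcases w with _ | ⟨_ | _ | _, t⟩
    · exact .inl (mem_flatStart.mpr (.inl rfl))
    · exact .inr (exists_bargraph_append_flatStart hw rfl)
    · exact .inl (mem_flatStart.mpr (.inr ⟨t, cons_H_mem_cornerlessMotzkin.mp hw, rfl⟩))
    · exact absurd (IsMotzkinPrefix.val_nonneg_of_head hw.1.1 rfl) (by simp [Step.val])
  · rintro (hs | ⟨b, hb, s, hs, rfl⟩)
    exacts [mem_cornerlessMotzkin_of_mem_flatStart hs, append_mem_cornerlessMotzkin hb hs]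

lemma bargraphs_eq :
    bargraphs = {[.U]} * (cornerlessMotzkin - 1) * {[.D]} := by
  ext w
  simp [Language.mem_mul, Language.mem_sub, mem_bargraphs, isBargraph_iff_exists, and_assoc]

section GeneratingFunction

instance : Fintype Step := ⟨{.U, .H, .D}, fun a => by cases a <;> decide⟩

variable {L M : Language Step} {d : Fin 2 →₀ ℕ}

noncomputable def weight (w : List Step) : Fin 2 →₀ ℕ :=
  Finsupp.single 0 (w.count .H) + Finsupp.single 1 (w.count .U)

def UnambiguousMul (L M : Language Step) : Prop :=
  Set.InjOn (fun p : List Step × List Step => p.1 ++ p.2) {p | p.1 ∈ L ∧ p.2 ∈ M}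

lemma unambiguousMul_singleton_left (u : List Step) (L : Language Step) :
    UnambiguousMul {u} L := by
  rintro ⟨a, b⟩ ⟨rfl, -⟩ ⟨a', b'⟩ ⟨rfl, -⟩ h
  simpa using h

lemma unambiguousMul_singleton_right (L : Language Step) (u : List Step) :
    UnambiguousMul L {u} := by
  rintro ⟨a, b⟩ ⟨-, rfl⟩ ⟨a', b'⟩ ⟨-, rfl⟩ h
  simpa using h

lemma weight_append : weight (u ++ v) = weight u + weight v := by
  simp only [weight, count_append, Finsupp.single_add]
  abel

lemma weight_eq_iff : weight w = d ↔ w.count .H = d 0 ∧ w.count .U = d 1 := by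
  constructor
  · rintro rfl
    simp [weight]
  · rintro ⟨h0, h1⟩
    ext i
    fin_cases i <;> simp [weight, h0, h1]

def slice (L : Language Step) (d : Fin 2 →₀ ℕ) : Set (List Step) :=
  {w | w ∈ L ∧ weight w = d}

/-- `Set.ncard` is `0` on infinite sets, so `gf` is additive and multiplicative only on
languages with finite slices. -/
def FiniteSlices (L : Language Step) : Prop := ∀ d, (slice L d).Finite

noncomputable def gf (L : Language Step) : MvPowerSeries (Fin 2) ℚ := fun d => (slice L d).ncard

lemma coeff_gf : MvPowerSeries.coeff d (gf L) = (slice L d).ncard := rfl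

lemma BG_eq_gf_bargraphs : BG = gf bargraphs := by
  funext d
  change (Nat.card _ : ℚ) = (Nat.card (slice bargraphs d) : ℚ)
  congr 1
  exact Nat.card_congr (Equiv.subtypeEquivRight fun w => by
    simp [slice, weight_eq_iff, mem_bargraphs])

lemma FiniteSlices.mono (h : ∀ w ∈ L, w ∈ M) (hM : FiniteSlices M) : FiniteSlices L :=
  fun d => (hM d).subset fun w hw => ⟨h w hw.1, hw.2⟩

lemma finiteSlices_singleton (u : List Step) : FiniteSlices {u} :=
  fun _ => (Set.finite_singleton u).subset fun _ hw => hw.1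

lemma finiteSlices_of_forall_hgt_eq (c : ℤ) (h : ∀ w ∈ L, hgt w = c) : FiniteSlices L := by
  intro d
  refine (List.finite_length_le Step (d 0 + 2 * d 1 + c.natAbs)).subset fun w ⟨hw, hd⟩ => ?_
  have hh := hgt_eq_count_sub_count (w := w)
  have hl := length_eq_count_add_count_add_count (w := w)
  obtain ⟨h0, h1⟩ := weight_eq_iff.mp hd
  rw [h w hw] at hh
  simp only [Set.mem_ofPred_eq]
  omega

lemma gf_add (h : ∀ w ∈ L, w ∉ M) (hL : FiniteSlices L) (hM : FiniteSlices M) :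
    gf (L + M) = gf L + gf M := by
  ext d
  have hslice : slice (L + M) d = slice L d ∪ slice M d := by
    ext w
    simp only [slice, Language.mem_add, Set.mem_union, Set.mem_ofPred_eq, or_and_right]
  rw [map_add, coeff_gf, coeff_gf, coeff_gf, hslice,
    Set.ncard_union_eq (Set.disjoint_left.mpr fun w hw hw' => h w hw.1 hw'.1) (hL d) (hM d),
    Nat.cast_add]

open Finset.HasAntidiagonal in
lemma gf_mul (hL : FiniteSlices L) (hM : FiniteSlices M) (h : UnambiguousMul L M) :
    gf (L * M) = gf L * gf M := by
  classical
  ext d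
  simp only [MvPowerSeries.coeff_mul, coeff_gf, ← Nat.cast_mul, ← Nat.cast_sum]
  congr 1
  set pairs := fun e : (Fin 2 →₀ ℕ) × (Fin 2 →₀ ℕ) => slice L e.1 ×ˢ slice M e.2
  have hslice : slice (L * M) d =
      (fun p : List Step × List Step => p.1 ++ p.2) ''
        ⋃ e ∈ (antidiagonal d : Set _), pairs e := by
    ext w
    simp only [slice, Language.mem_mul, Set.mem_ofPred_eq, Set.mem_image, Set.mem_iUnion,
      Finset.mem_coe, mem_antidiagonal, pairs, Set.mem_prod]
    constructor
    · rintro ⟨⟨a, ha, b, hb, rfl⟩, hd⟩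
      refine ⟨(a, b), ⟨(weight a, weight b), ?_, ⟨ha, rfl⟩, ⟨hb, rfl⟩⟩, rfl⟩
      rwa [← weight_append]
    · rintro ⟨⟨a, b⟩, ⟨e, he, ⟨ha, hea⟩, ⟨hb, heb⟩⟩, rfl⟩
      exact ⟨⟨a, ha, b, hb, rfl⟩, by rw [weight_append, hea, heb, he]⟩
  have hdisj : (antidiagonal d : Set _).PairwiseDisjoint pairs := by
    intro e _ e' _ hne
    refine Set.disjoint_left.mpr ?_
    rintro ⟨a, b⟩ ⟨⟨-, ha⟩, ⟨-, hb⟩⟩ ⟨⟨-, ha'⟩, ⟨-, hb'⟩⟩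
    exact hne (Prod.ext (ha.symm.trans ha') (hb.symm.trans hb'))
  rw [hslice, Set.InjOn.ncard_image (Set.InjOn.mono ?_ h),
    (antidiagonal d).finite_toSet.ncard_biUnion (fun e _ => (hL e.1).prod (hM e.2)) hdisj,
    finsum_mem_coe_finset]
  · simp [Set.ncard_prod]
  · simp only [Set.iUnion_subset_iff]
    exact fun e _ p hp => ⟨hp.1.1, hp.2.1⟩

lemma gf_singleton (u : List Step) : gf {u} = MvPowerSeries.monomial (weight u) 1 := by
  classical
  ext d
  rw [coeff_gf, MvPowerSeries.coeff_monomial]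
  split_ifs with h
  · have : slice {u} d = {u} := by
      ext w
      simp only [slice, Language.mem_singleton, Set.mem_ofPred_eq, Set.mem_singleton_iff]
      exact ⟨And.left, fun hw => ⟨hw, hw ▸ h.symm⟩⟩
    simp [this]
  · have : slice {u} d = ∅ := by
      ext w
      simp only [slice, Language.mem_singleton, Set.mem_ofPred_eq, Set.mem_empty_iff_false]
      refine iff_false_intro ?_
      rintro ⟨rfl, rfl⟩
      exact h rfl
    simp [this]

lemma gf_one : gf 1 = 1 :=
  (gf_singleton []).trans (by simp [weight])

lemma gf_H : gf {[.H]} = MvPowerSeries.X 0 := by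
  simp [gf_singleton, weight, MvPowerSeries.X_def]

lemma gf_U : gf {[.U]} = MvPowerSeries.X 1 := by
  simp [gf_singleton, weight, MvPowerSeries.X_def]

lemma gf_D : gf {[.D]} = 1 := by
  simp [gf_singleton, weight]

lemma gf_sub_one (hL : FiniteSlices L) (h : [] ∈ L) : gf (L - 1) = gf L - 1 := by
  have hsplit : 1 + (L - 1) = L := by
    ext w
    simp only [Language.mem_add, Language.mem_sub, Language.mem_one]
    by_cases hw : w = [] <;> simp [hw, h]
  rw [eq_sub_iff_add_eq', ← gf_one, ← gf_add (L := 1) (fun w hw hw' => hw'.2 hw)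
    (finiteSlices_singleton []) (hL.mono fun _ hw => hw.1), hsplit]

end GeneratingFunction

lemma unambiguousMul_bargraphs (L : Language Step) : UnambiguousMul bargraphs L := by
  rintro ⟨b, s⟩ ⟨hb, -⟩ ⟨b', s'⟩ ⟨hb', -⟩ (h : b ++ s = b' ++ s')
  have hbb : b = b' := by
    rcases prefix_or_prefix_of_prefix (h ▸ prefix_append b s) (prefix_append b' s') with h' | h'
    · exact IsBargraph.eq_of_prefix hb hb' h'
    · exact (IsBargraph.eq_of_prefix hb' hb h').symm
  subst hbb
  rw [append_cancel_left h]

lemma finiteSlices_cornerlessMotzkin : FiniteSlices cornerlessMotzkin :=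
  finiteSlices_of_forall_hgt_eq 0 fun _ hw => hw.1.2

lemma gf_flatStart :
    gf flatStart = 1 + MvPowerSeries.X 0 * gf cornerlessMotzkin := by
  rw [flatStart, gf_add, gf_one, gf_mul (finiteSlices_singleton _)
    finiteSlices_cornerlessMotzkin (unambiguousMul_singleton_left _ _), gf_H]
  · rintro w hw ⟨a, rfl, b, -, rfl⟩
    simp at hw
  · exact finiteSlices_singleton _
  · exact finiteSlices_cornerlessMotzkin.mono fun w hw =>
      mem_cornerlessMotzkin_of_mem_flatStart (Language.mem_add _ _ _ |>.mpr (.inr hw))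

lemma gf_cornerlessMotzkin :
    gf cornerlessMotzkin = gf flatStart + gf bargraphs * gf flatStart := by
  have hS : FiniteSlices flatStart :=
    finiteSlices_cornerlessMotzkin.mono fun _ => mem_cornerlessMotzkin_of_mem_flatStart
  conv_lhs => rw [cornerlessMotzkin_eq]
  rw [gf_add, gf_mul (finiteSlices_of_forall_hgt_eq 0 fun _ hw => hw.2.1) hS
    (unambiguousMul_bargraphs _)]
  · rintro w hw ⟨b, hb, s, -, rfl⟩
    obtain ⟨v, -, -, rfl⟩ := isBargraph_iff_exists.mp hb
    rcases mem_flatStart.mp hw with h | ⟨u, -, h⟩ <;> simp at h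
  · exact hS
  · exact finiteSlices_cornerlessMotzkin.mono fun w hw =>
      cornerlessMotzkin_eq ▸ (Language.mem_add _ _ _ |>.mpr (.inr hw))

lemma gf_bargraphs :
    gf bargraphs = MvPowerSeries.X 1 * (gf cornerlessMotzkin - 1) := by
  have hM₁ : FiniteSlices (cornerlessMotzkin - 1) :=
    finiteSlices_cornerlessMotzkin.mono fun _ hw => hw.1
  have hUM : FiniteSlices ({[.U]} * (cornerlessMotzkin - 1)) := by
    refine finiteSlices_of_forall_hgt_eq 1 fun w hw => ?_
    obtain ⟨a, rfl, v, hv, rfl⟩ := Language.mem_mul.mp hw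
    simp [Step.val, hv.1.1.2]
  rw [bargraphs_eq, gf_mul hUM (finiteSlices_singleton _) (unambiguousMul_singleton_right _ _),
    gf_D, mul_one, gf_mul (finiteSlices_singleton _) hM₁ (unambiguousMul_singleton_left _ _),
    gf_U, gf_sub_one finiteSlices_cornerlessMotzkin nil_mem_cornerlessMotzkin]

end Bargraph

/-- the generating function `B(x,y)` of bargraphs satisfies
`x B² − (1 − x − y − xy) B + xy = 0`. -/
theorem BG_equation :
    (MvPowerSeries.X (0 : Fin 2) : MvPowerSeries (Fin 2) ℚ) * BG ^ 2
      - (1 - MvPowerSeries.X (0 : Fin 2) - MvPowerSeries.X (1 : Fin 2)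
          - MvPowerSeries.X (0 : Fin 2) * MvPowerSeries.X (1 : Fin 2)) * BG
      + MvPowerSeries.X (0 : Fin 2) * MvPowerSeries.X (1 : Fin 2) = 0 := by
  have hM := Bargraph.gf_cornerlessMotzkin
  have hS := Bargraph.gf_flatStart
  have hB := Bargraph.gf_bargraphs
  rw [Bargraph.BG_eq_gf_bargraphs]
  linear_combination (-MvPowerSeries.X 1) * hM
    + (-MvPowerSeries.X 1 * (1 + Bargraph.gf Bargraph.bargraphs)) * hS
    + (MvPowerSeries.X 0 * (1 + Bargraph.gf Bargraph.bargraphs) - 1) * hB
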